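/- With notation as in Clifford theory: if V is a simple K-module with inertia group Γ_V, factor set β, and U is a simple module over the twisted group algebra (ℂΓ_V)_{β^{−1}}, then the action of K ⋊ Γ_V on V ⊗ U defined by xγ·(v ⊗ u) = (x·τ_γ v) ⊗ (γ·u) is a well-defined module structure (the twisted terms cancel the factor set). -/
import Mathlib


/-!
STATEMENT 11: Clifford theory — the action of K ⋊ Γ_V on V ⊗ U is well
defined.  V is a simple K-module with intertwiners τ_γ (factor set β), and U
is a module over the twisted group algebra (ℂΓ_V)_{β⁻¹}, i.e. a vector space
with operators σ_γ satisfying σ_γσ_{γ'} = β(γ,γ')⁻¹ σ_{γγ'}.  The formula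
xγ·(v ⊗ u) = (x·τ_γ v) ⊗ (γ·u) defines a module structure on V ⊗ U: the
operators g_γ = τ_γ ⊗ σ_γ satisfy g_1 = id and g_γ g_{γ'} = g_{γγ'} (the
twists cancel the factor set), and they interact with the K-action by
g_γ ((x·v) ⊗ u) = (γ(x)·τ_γ v) ⊗ (σ_γ u).
-/

open TensorProduct

theorem crossed_product_action_well_defined
    (K : Type) [Ring K] [Algebra ℂ K] [FiniteDimensional ℂ K]
    (Γ : Type) [Group Γ] [Finite Γ]
    (act : Γ →* (K ≃ₐ[ℂ] K))
    (V : Type) [AddCommGroup V] [Module ℂ V] [Module K V] [IsScalarTower ℂ K V]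
    [FiniteDimensional ℂ V]
    (hsimple : IsSimpleModule K V)
    (U : Type) [AddCommGroup U] [Module ℂ U]
    (τ : Γ → (V ≃ₗ[ℂ] V))
    (hτ : ∀ (γ : Γ) (x : K) (v : V), τ γ (x • v) = act γ x • τ γ v)
    (β : Γ → Γ → ℂˣ)
    (hβ : ∀ (γ γ' : Γ) (v : V), τ γ (τ γ' v) = (β γ γ' : ℂ) • τ (γ * γ') v)
    (σ : Γ → (U ≃ₗ[ℂ] U))
    -- U is a module over the twisted group algebra (ℂΓ)_{β⁻¹}:
    (hσ : ∀ (γ γ' : Γ) (u : U), σ γ (σ γ' u) = ((β γ γ')⁻¹ : ℂˣ) • σ (γ * γ') u) :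
    (TensorProduct.map (τ 1).toLinearMap (σ 1).toLinearMap = LinearMap.id) ∧
    (∀ γ γ' : Γ,
      (TensorProduct.map (τ γ).toLinearMap (σ γ).toLinearMap) ∘ₗ
        (TensorProduct.map (τ γ').toLinearMap (σ γ').toLinearMap) =
      TensorProduct.map (τ (γ * γ')).toLinearMap (σ (γ * γ')).toLinearMap) ∧
    (∀ (γ : Γ) (x : K) (v : V) (u : U),
      TensorProduct.map (τ γ).toLinearMap (σ γ).toLinearMap ((x • v) ⊗ₜ u) =
        (act γ x • τ γ v) ⊗ₜ (σ γ u)) := by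
  have hτ1 : ∀ v : V, τ 1 v = (β 1 1 : ℂ) • v := by
    intro v
    have h := hβ 1 1 v
    rw [one_mul] at h
    have : τ 1 (τ 1 v) = τ 1 ((β 1 1 : ℂ) • v) := by
      rw [map_smul]; exact h
    exact (τ 1).injective this
  have hσ1 : ∀ u : U, σ 1 u = (((β 1 1)⁻¹ : ℂˣ) : ℂ) • u := by
    intro u
    have h := hσ 1 1 u
    rw [one_mul] at h
    have : σ 1 (σ 1 u) = σ 1 ((((β 1 1)⁻¹ : ℂˣ) : ℂ) • u) := by
      rw [map_smul]; exact h
    exact (σ 1).injective this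
  refine ⟨?_, ?_, ?_⟩
  · apply TensorProduct.ext'
    intro v u
    simp only [TensorProduct.map_tmul, LinearEquiv.coe_coe, LinearMap.id_coe, id_eq,
      hτ1, hσ1]
    rw [TensorProduct.smul_tmul, ← smul_assoc]
    norm_num
  · intro γ γ'
    apply TensorProduct.ext'
    intro v u
    simp only [LinearMap.comp_apply, TensorProduct.map_tmul, LinearEquiv.coe_coe,
      hβ, hσ]
    rw [TensorProduct.smul_tmul, Units.smul_def, smul_smul, Units.mul_inv, one_smul]
  · intro γ x v u
    simp [TensorProduct.map_tmul, hτ]
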